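/- arXiv:2410.20064 — 2 statements merged into one kernel-verified Lean document; each statement's English description precedes it below -/
import Mathlib

section
/- The number of overpartitions of n into odd parts equals the sum over all solutions in nonnegative integers of t₁ + 2t₂ + ... + n·tₙ = n of the product ∏_{j=1}^n C(v(j), t_j), where v(j) = 1 + v₂(4j-2) if j is odd and v(j) = v₂(4j-2) if j is even. -/
open Finset

/-- The number of overpartitions of `n` into odd parts: for each partition of `n`
into odd parts, the first occurrence of each distinct part may be overlined, so
each such partition contributes `2 ^ (number of distinct part sizes)`. -/
def overPartitionsOdd (n : ℕ) : ℕ :=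
  ∑ p ∈ Nat.Partition.odds n, 2 ^ p.parts.toFinset.card

/-- The exponent `v(j)`: `1 + v₂(4j-2)` if `j` is odd, `v₂(4j-2)` if `j` is even. -/
def vOver (j : ℕ) : ℕ :=
  if Odd j then padicValNat 2 (4 * j - 2) + 1 else padicValNat 2 (4 * j - 2)

namespace OverPf

/-- number of marked coordinates -/
def cnt (x : Bool × Bool) : ℕ := x.1.toNat + x.2.toNat

lemma cnt_le_two (x : Bool × Bool) : cnt x ≤ 2 := by
  rcases x with ⟨a, b⟩; cases a <;> cases b <;> decide

def v2 (b : ℕ) : ℕ := b.factorization 2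
def oc2 (b : ℕ) : ℕ := b / 2 ^ v2 b

lemma op_mul_oc (b : ℕ) : 2 ^ v2 b * oc2 b = b := by
  rcases eq_or_ne b 0 with rfl | hb
  · simp [v2, oc2]
  · exact Nat.ordProj_mul_ordCompl_eq_self b 2

lemma odd_oc2 {b : ℕ} (hb : b ≠ 0) : Odd (oc2 b) := by
  have h := Nat.not_dvd_ordCompl Nat.prime_two hb
  rcases Nat.even_or_odd (oc2 b) with he | ho
  · exact absurd he.two_dvd h
  · exact ho

lemma v2_mul_pow {a : ℕ} (ha : Odd a) (i : ℕ) : v2 (a * 2 ^ i) = i := by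
  have ha0 : a ≠ 0 := by rintro rfl; simp at ha
  have h2 : ¬ (2 : ℕ) ∣ a := by
    intro h; exact (Nat.not_even_iff_odd.2 ha) (even_iff_two_dvd.2 h)
  rw [v2, Nat.factorization_mul ha0 (pow_ne_zero _ two_ne_zero)]
  simp [Nat.factorization_eq_zero_of_not_dvd h2, Nat.Prime.factorization_pow Nat.prime_two]

lemma oc2_mul_pow {a : ℕ} (ha : Odd a) (i : ℕ) : oc2 (a * 2 ^ i) = a := by
  rw [oc2, v2_mul_pow ha, Nat.mul_div_cancel _ (pow_pos two_pos i)]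

/-- inverse Glaisher map : finset of naturals to multiset of (odd) naturals -/
def gl (D : Finset ℕ) : Multiset ℕ :=
  D.val.bind fun b => Multiset.replicate (2 ^ v2 b) (oc2 b)

/-- forward Glaisher map -/
def G (μ : Multiset ℕ) : Finset ℕ :=
  μ.toFinset.biUnion fun a => ((Nat.bitIndices (μ.count a)).map fun i => a * 2 ^ i).toFinset

lemma count_gl (D : Finset ℕ) (a : ℕ) :
    (gl D).count a = ∑ b ∈ D, if oc2 b = a then 2 ^ v2 b else 0 := by
  rw [gl, Multiset.count_bind]
  rw [Finset.sum]
  congr 1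
  apply Multiset.map_congr rfl
  intro b _
  simp [Multiset.count_replicate, eq_comm]

lemma sum_gl (D : Finset ℕ) : (gl D).sum = ∑ b ∈ D, b := by
  rw [gl, Multiset.sum_bind, Finset.sum]
  congr 1
  apply Multiset.map_congr rfl
  intro b _
  rw [Multiset.sum_replicate, smul_eq_mul, op_mul_oc]

lemma odd_of_mem_gl {D : Finset ℕ} (hD : 0 ∉ D) {x : ℕ} (hx : x ∈ gl D) : Odd x := by
  rw [gl, Multiset.mem_bind] at hx
  obtain ⟨b, hb, hx⟩ := hx
  rw [Multiset.eq_of_mem_replicate hx]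
  exact odd_oc2 (fun h => hD (h ▸ hb))

lemma mem_bitIndices_count_gl {D : Finset ℕ} (hD : 0 ∉ D) {a : ℕ} (ha : Odd a) (i : ℕ) :
    i ∈ Nat.bitIndices ((gl D).count a) ↔ a * 2 ^ i ∈ D := by
  classical
  set E : Finset ℕ := (D.filter fun b => oc2 b = a).image v2 with hE
  have hinj : Set.InjOn v2 ↑(D.filter fun b => oc2 b = a) := by
    intro b hb b' hb' h
    simp only [coe_filter, Set.mem_setOf_eq] at hb hb'
    rw [← op_mul_oc b, ← op_mul_oc b', hb.2, hb'.2, h]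
  have hcount : (gl D).count a = ∑ i ∈ E, 2 ^ i := by
    rw [count_gl, ← Finset.sum_filter, hE, Finset.sum_image hinj]
  have hEsum : (∑ i ∈ E, 2 ^ i) = ((E.sort (· ≤ ·)).map fun i => 2 ^ i).sum := by
    rw [Finset.sum, ← Finset.sort_eq E (· ≤ ·), Multiset.map_coe, Multiset.sum_coe]
  have hbi : Nat.bitIndices ((gl D).count a) = E.sort (· ≤ ·) := by
    rw [hcount, hEsum, Nat.bitIndices_twoPowsum (Finset.sortedLT_sort E)]
  rw [hbi, Finset.mem_sort]
  constructor
  · intro hi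
    rw [hE, Finset.mem_image] at hi
    obtain ⟨b, hb, rfl⟩ := hi
    rw [Finset.mem_filter] at hb
    rw [← hb.2, mul_comm, op_mul_oc]
    exact hb.1
  · intro hmem
    rw [hE, Finset.mem_image]
    refine ⟨a * 2 ^ i, Finset.mem_filter.2 ⟨hmem, oc2_mul_pow ha i⟩, v2_mul_pow ha i⟩

lemma G_gl {D : Finset ℕ} (hD : 0 ∉ D) : G (gl D) = D := by
  ext b
  simp only [G, Finset.mem_biUnion, Multiset.mem_toFinset, List.mem_toFinset, List.mem_map]
  constructor
  · rintro ⟨a, ha, i, hi, rfl⟩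
    exact (mem_bitIndices_count_gl hD (odd_of_mem_gl hD ha) i).1 hi
  · intro hb
    have hb0 : b ≠ 0 := fun h => hD (h ▸ hb)
    have hbi : v2 b ∈ Nat.bitIndices ((gl D).count (oc2 b)) :=
      (mem_bitIndices_count_gl hD (odd_oc2 hb0) _).2 (by rwa [mul_comm, op_mul_oc])
    have hcpos : 0 < (gl D).count (oc2 b) :=
      lt_of_lt_of_le (pow_pos two_pos _) (Nat.two_pow_le_of_mem_bitIndices hbi)
    exact ⟨oc2 b, Multiset.count_pos.1 hcpos, v2 b, hbi, by rw [mul_comm, op_mul_oc]⟩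

lemma gl_G {μ : Multiset ℕ} (hμ : ∀ x ∈ μ, Odd x) : gl (G μ) = μ := by
  classical
  have hodd : ∀ a ∈ μ.toFinset, Odd a := fun a ha => hμ a (Multiset.mem_toFinset.1 ha)
  ext c
  rw [count_gl, G]
  have hdisj : (↑μ.toFinset : Set ℕ).PairwiseDisjoint
      (fun a => ((Nat.bitIndices (μ.count a)).map fun i => a * 2 ^ i).toFinset) := by
    intro a ha a' ha' hne
    simp only [Finset.disjoint_left, List.mem_toFinset, List.mem_map]
    rintro x ⟨i, _, rfl⟩ ⟨i', _, h⟩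
    apply hne
    have := oc2_mul_pow (hodd a ha) i
    rw [← h, oc2_mul_pow (hodd a' ha') i'] at this
    exact this.symm
  rw [Finset.sum_biUnion hdisj]
  have hstep : ∀ a ∈ μ.toFinset,
      (∑ b ∈ ((Nat.bitIndices (μ.count a)).map fun i => a * 2 ^ i).toFinset,
        if oc2 b = c then 2 ^ v2 b else 0) = if a = c then μ.count a else 0 := by
    intro a ha
    have hodda := hodd a ha
    have ha0 : a ≠ 0 := by rintro rfl; simp at hodda
    have hnd : ((Nat.bitIndices (μ.count a)).map fun i => a * 2 ^ i).Nodup := by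
      refine List.Nodup.map ?_ (Nat.bitIndices_sorted.nodup)
      intro i i' h
      exact Nat.pow_right_injective le_rfl
        (Nat.eq_of_mul_eq_mul_left (Nat.pos_of_ne_zero ha0) h)
    rw [List.sum_toFinset _ hnd, List.map_map]
    have : ∀ i ∈ Nat.bitIndices (μ.count a),
        ((fun b => if oc2 b = c then 2 ^ v2 b else 0) ∘ fun i => a * 2 ^ i) i
        = (fun i => if a = c then 2 ^ i else 0) i := by
      intro i _
      simp only [Function.comp_apply, oc2_mul_pow hodda, v2_mul_pow hodda]
    rw [List.map_congr_left this]
    by_cases hac : a = c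
    · simp only [hac, if_true]
      rw [← hac]
      simpa using Nat.twoPowSum_bitIndices (μ.count a)
    · simp [hac]
  rw [Finset.sum_congr rfl hstep, Finset.sum_ite_eq' μ.toFinset c (fun a => μ.count a)]
  by_cases hc : c ∈ μ.toFinset
  · simp [hc]
  · simp [hc, Multiset.count_eq_zero_of_notMem (fun h => hc (Multiset.mem_toFinset.2 h))]

lemma sum_G {μ : Multiset ℕ} (hμ : ∀ x ∈ μ, Odd x) : (∑ b ∈ G μ, b) = μ.sum := by
  rw [← sum_gl, gl_G hμ]

lemma exists_of_mem_G {μ : Multiset ℕ} {b : ℕ} (hb : b ∈ G μ) :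
    ∃ a i, a ∈ μ ∧ b = a * 2 ^ i := by
  simp only [G, Finset.mem_biUnion, Multiset.mem_toFinset, List.mem_toFinset, List.mem_map] at hb
  obtain ⟨a, ha, i, _, rfl⟩ := hb
  exact ⟨a, i, ha, rfl⟩

lemma vOver_eq {j : ℕ} (hj : j ≠ 0) : vOver j = if Odd j then 2 else 1 := by
  haveI : Fact (Nat.Prime 2) := ⟨Nat.prime_two⟩
  have h4 : 4 * j - 2 = 2 * (2 * j - 1) := by omega
  have hodd : ¬ (2:ℕ) ∣ (2 * j - 1) := by omega
  have hval : padicValNat 2 (4 * j - 2) = 1 := by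
    rw [h4, padicValNat.mul (by norm_num) (by omega), padicValNat.self one_lt_two,
      padicValNat.eq_zero_of_not_dvd hodd]
  unfold vOver
  rw [hval]

lemma card_cnt_eq (c : ℕ) :
    ((univ : Finset (Bool × Bool)).filter fun x => cnt x = c).card = Nat.choose 2 c := by
  match c with
  | 0 => decide
  | 1 => decide
  | 2 => decide
  | (c+3) =>
    rw [Nat.choose_eq_zero_of_lt (by omega), Finset.card_eq_zero,
      Finset.filter_eq_empty_iff]
    intro x _
    have := cnt_le_two x
    omega

lemma card_cnt_eq' (c : ℕ) :
    ((univ : Finset (Bool × Bool)).filter fun x => x.1 = false ∧ cnt x = c).card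
      = Nat.choose 1 c := by
  match c with
  | 0 => decide
  | 1 => decide
  | (c+2) =>
    rw [Nat.choose_eq_zero_of_lt (by omega), Finset.card_eq_zero,
      Finset.filter_eq_empty_iff]
    rintro ⟨a, b⟩ _ ⟨h1, h2⟩
    subst h1
    cases b <;> simp [cnt] at h2

def Pset (n : ℕ) : Finset (Fin n → Bool × Bool) :=
  univ.filter fun f =>
    (∀ j : Fin n, Even ((j : ℕ) + 1) → (f j).1 = false) ∧
      ∑ j : Fin n, ((j : ℕ) + 1) * cnt (f j) = n

lemma cnt_le_of_mem {n : ℕ} {f : Fin n → Bool × Bool} (hf : f ∈ Pset n) (j : Fin n) :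
    cnt (f j) ≤ n := by
  rw [Pset, Finset.mem_filter] at hf
  have h1 : ((j : ℕ) + 1) * cnt (f j) ≤ n := by
    have h := Finset.single_le_sum (f := fun i : Fin n => ((i : ℕ) + 1) * cnt (f i))
      (fun i _ => Nat.zero_le _) (mem_univ j)
    rw [hf.2.2] at h
    exact h
  have h2 : cnt (f j) ≤ ((j : ℕ) + 1) * cnt (f j) :=
    Nat.le_mul_of_pos_left _ (Nat.succ_pos _)
  omega

lemma rhs_eq_card (n : ℕ) :
    (∑ t ∈ (univ : Finset (Fin n → Fin (n + 1))).filter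
        (fun t => ∑ i : Fin n, ((i : ℕ) + 1) * (t i : ℕ) = n),
      ∏ i : Fin n, Nat.choose (vOver ((i : ℕ) + 1)) (t i : ℕ)) = (Pset n).card := by
  classical
  have hτmem : ∀ f ∈ Pset n,
      (fun j : Fin n => (⟨min (cnt (f j)) n, by omega⟩ : Fin (n+1))) ∈
        (univ : Finset (Fin n → Fin (n + 1))).filter
          (fun t => ∑ i : Fin n, ((i : ℕ) + 1) * (t i : ℕ) = n) := by
    intro f hf
    rw [Finset.mem_filter]
    refine ⟨mem_univ _, ?_⟩
    have hsum := (Finset.mem_filter.1 hf).2.2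
    calc ∑ i : Fin n, ((i : ℕ) + 1) * ((⟨min (cnt (f i)) n, by omega⟩ : Fin (n+1)) : ℕ)
        = ∑ j : Fin n, ((j : ℕ) + 1) * cnt (f j) := by
          apply Finset.sum_congr rfl
          intro j _
          have := cnt_le_of_mem hf j
          simp [Nat.min_eq_left this]
      _ = n := hsum
  rw [Finset.card_eq_sum_card_fiberwise hτmem]
  apply Finset.sum_congr rfl
  intro t ht
  rw [Finset.mem_filter] at ht
  have hfiber : (Pset n).filter
      (fun f => (fun j : Fin n => (⟨min (cnt (f j)) n, by omega⟩ : Fin (n+1))) = t) =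
      Fintype.piFinset (fun j : Fin n => (univ : Finset (Bool × Bool)).filter
        (fun x => (Even ((j : ℕ) + 1) → x.1 = false) ∧ cnt x = (t j : ℕ))) := by
    ext f
    simp only [Fintype.mem_piFinset, Finset.mem_filter, Finset.mem_univ, true_and]
    constructor
    · rintro ⟨hfP, hτ⟩
      intro j
      have hok := (Finset.mem_filter.1 hfP).2.1 j
      have hle := cnt_le_of_mem hfP j
      have := congrFun hτ j
      rw [Fin.ext_iff] at this
      simp only [Nat.min_eq_left hle] at this
      exact ⟨hok, this⟩
    · intro h
      have hsum : ∑ j : Fin n, ((j : ℕ) + 1) * cnt (f j) = n := by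
        calc ∑ j : Fin n, ((j : ℕ) + 1) * cnt (f j)
            = ∑ i : Fin n, ((i : ℕ) + 1) * ((t i : ℕ)) :=
              Finset.sum_congr rfl fun j _ => by rw [(h j).2]
          _ = n := ht.2
      have hfP : f ∈ Pset n := by
        rw [Pset, Finset.mem_filter]
        exact ⟨mem_univ _, fun j => (h j).1, hsum⟩
      refine ⟨hfP, ?_⟩
      funext j
      rw [Fin.ext_iff]
      simp only [Nat.min_eq_left (cnt_le_of_mem hfP j)]
      exact (h j).2
  rw [hfiber, Fintype.card_piFinset]
  apply Finset.prod_congr rfl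
  intro j _
  by_cases hoddj : Odd ((j : ℕ) + 1)
  · rw [vOver_eq (Nat.succ_ne_zero _), if_pos hoddj, ← card_cnt_eq]
    congr 1
    apply Finset.filter_congr
    intro x _
    have : ¬ Even ((j : ℕ) + 1) := Nat.not_even_iff_odd.2 hoddj
    simp [this]
  · rw [vOver_eq (Nat.succ_ne_zero _), if_neg hoddj, ← card_cnt_eq']
    congr 1
    apply Finset.filter_congr
    intro x _
    have : Even ((j : ℕ) + 1) := Nat.not_odd_iff_even.1 hoddj
    simp [this]


def s₁ (n : ℕ) (f : Fin n → Bool × Bool) : Finset ℕ :=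
  (univ.filter fun j => (f j).1).image fun j : Fin n => (j : ℕ) + 1

def s₂ (n : ℕ) (f : Fin n → Bool × Bool) : Finset ℕ :=
  (univ.filter fun j => (f j).2).image fun j : Fin n => (j : ℕ) + 1

lemma mem_s₁ {n : ℕ} {f : Fin n → Bool × Bool} {m : ℕ} :
    m ∈ s₁ n f ↔ ∃ j : Fin n, (f j).1 = true ∧ (j : ℕ) + 1 = m := by
  simp [s₁]

lemma mem_s₂ {n : ℕ} {f : Fin n → Bool × Bool} {m : ℕ} :
    m ∈ s₂ n f ↔ ∃ j : Fin n, (f j).2 = true ∧ (j : ℕ) + 1 = m := by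
  simp [s₂]

lemma succ_mem_s₁ {n : ℕ} {f : Fin n → Bool × Bool} (j : Fin n) :
    ((j : ℕ) + 1 ∈ s₁ n f) ↔ (f j).1 = true := by
  rw [mem_s₁]
  constructor
  · rintro ⟨j', h, hj⟩
    have : j' = j := Fin.ext (by omega)
    rwa [← this]
  · intro h; exact ⟨j, h, rfl⟩

lemma succ_mem_s₂ {n : ℕ} {f : Fin n → Bool × Bool} (j : Fin n) :
    ((j : ℕ) + 1 ∈ s₂ n f) ↔ (f j).2 = true := by
  rw [mem_s₂]
  constructor
  · rintro ⟨j', h, hj⟩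
    have : j' = j := Fin.ext (by omega)
    rwa [← this]
  · intro h; exact ⟨j, h, rfl⟩

lemma zero_not_mem_s₁ {n : ℕ} (f : Fin n → Bool × Bool) : 0 ∉ s₁ n f := by
  rw [mem_s₁]; rintro ⟨j, -, h⟩; omega

lemma zero_not_mem_s₂ {n : ℕ} (f : Fin n → Bool × Bool) : 0 ∉ s₂ n f := by
  rw [mem_s₂]; rintro ⟨j, -, h⟩; omega

lemma sum_s (n : ℕ) (f : Fin n → Bool × Bool) :
    (∑ b ∈ s₁ n f, b) + (∑ b ∈ s₂ n f, b) = ∑ j : Fin n, ((j : ℕ) + 1) * cnt (f j) := by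
  have hinj : ∀ (s : Finset (Fin n)), Set.InjOn (fun j : Fin n => (j : ℕ) + 1) ↑s :=
    fun s a _ b _ h => Fin.ext (by simpa using h)
  have h1 : (∑ b ∈ s₁ n f, b) = ∑ j : Fin n, if (f j).1 then (j : ℕ) + 1 else 0 := by
    rw [s₁, Finset.sum_image (hinj _), Finset.sum_filter]
  have h2 : (∑ b ∈ s₂ n f, b) = ∑ j : Fin n, if (f j).2 then (j : ℕ) + 1 else 0 := by
    rw [s₂, Finset.sum_image (hinj _), Finset.sum_filter]
  rw [h1, h2, ← Finset.sum_add_distrib]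
  apply Finset.sum_congr rfl
  intro j _
  cases h1 : (f j).1 <;> cases h2 : (f j).2 <;> simp [cnt, h1, h2] <;> ring

lemma odd_pos {x : ℕ} (h : Odd x) : 0 < x := by
  rcases h with ⟨k, rfl⟩; omega

/-- the partition associated to `f ∈ Pset n` -/
def part (n : ℕ) (f : Fin n → Bool × Bool) (hf : f ∈ Pset n) : Nat.Partition n where
  parts := (s₁ n f).val + gl (s₂ n f)
  parts_pos := by
    intro i hi
    rw [Multiset.mem_add] at hi
    rcases hi with hi | hi
    · have : i ∈ s₁ n f := hi
      rw [mem_s₁] at this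
      obtain ⟨j, -, hj⟩ := this
      omega
    · exact odd_pos (odd_of_mem_gl (zero_not_mem_s₂ f) hi)
  parts_sum := by
    rw [Multiset.sum_add, sum_gl]
    have h1 : (s₁ n f).val.sum = ∑ b ∈ s₁ n f, b := by
      rw [Finset.sum_eq_multiset_sum, Multiset.map_id']
    rw [h1, sum_s n f]
    exact (Finset.mem_filter.1 hf).2.2

lemma part_parts_odd (n : ℕ) (f : Fin n → Bool × Bool) (hf : f ∈ Pset n) :
    ∀ i ∈ (part n f hf).parts, ¬ Even i := by
  intro i hi
  rw [part, Multiset.mem_add] at hi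
  rcases hi with hi | hi
  · have hi' : i ∈ s₁ n f := hi
    rw [mem_s₁] at hi'
    obtain ⟨j, hj1, hj2⟩ := hi'
    intro hev
    have := (Finset.mem_filter.1 hf).2.1 j (by rw [hj2]; exact hev)
    rw [this] at hj1
    exact Bool.false_ne_true hj1
  · exact Nat.not_even_iff_odd.2 (odd_of_mem_gl (zero_not_mem_s₂ f) hi)

lemma card_eq (n : ℕ) :
    (Pset n).card =
      ((Nat.Partition.odds n).sigma fun p => p.parts.toFinset.powerset).card := by
  classical
  apply Finset.card_bij (fun f hf => (⟨part n f hf, s₁ n f⟩ : Σ _ : Nat.Partition n, Finset ℕ))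
  · -- maps into
    intro f hf
    rw [Finset.mem_sigma]
    constructor
    · rw [Nat.Partition.odds, Nat.Partition.restricted, Finset.mem_filter]
      exact ⟨mem_univ _, part_parts_odd n f hf⟩
    · rw [Finset.mem_powerset]
      intro x hx
      rw [Multiset.mem_toFinset, part, Multiset.mem_add]
      exact Or.inl hx
  · -- injective
    intro f hf f' hf' h
    obtain ⟨hp, hs⟩ := Sigma.mk.inj_iff.1 h
    have hs1 : s₁ n f = s₁ n f' := eq_of_heq hs
    have hparts : (s₁ n f).val + gl (s₂ n f) = (s₁ n f').val + gl (s₂ n f') :=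
      congrArg Nat.Partition.parts hp
    rw [hs1] at hparts
    have hgl : gl (s₂ n f) = gl (s₂ n f') := add_left_cancel hparts
    have hs2 : s₂ n f = s₂ n f' := by
      rw [← G_gl (zero_not_mem_s₂ f), ← G_gl (zero_not_mem_s₂ f'), hgl]
    funext j
    have e1 : (f j).1 = (f' j).1 := by
      rw [Bool.eq_iff_iff, ← succ_mem_s₁ (f := f) j, ← succ_mem_s₁ (f := f') j, hs1]
    have e2 : (f j).2 = (f' j).2 := by
      rw [Bool.eq_iff_iff, ← succ_mem_s₂ (f := f) j, ← succ_mem_s₂ (f := f') j, hs2]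
    exact Prod.ext e1 e2
  · -- surjective
    rintro ⟨p, S⟩ hq
    rw [Finset.mem_sigma, Finset.mem_powerset] at hq
    obtain ⟨hpodds, hS⟩ := hq
    rw [Nat.Partition.odds, Nat.Partition.restricted, Finset.mem_filter] at hpodds
    have hpodd : ∀ i ∈ p.parts, Odd i := fun i hi => Nat.not_even_iff_odd.1 (hpodds.2 i hi)
    have hSparts : ∀ a ∈ S, a ∈ p.parts := fun a ha => Multiset.mem_toFinset.1 (hS ha)
    have hSle : S.val ≤ p.parts := by
      rw [Multiset.le_iff_count]
      intro a
      by_cases haS : a ∈ S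
      · have h1 : S.val.count a = 1 := Multiset.count_eq_one_of_mem S.nodup haS
        rw [h1]
        exact Multiset.count_pos.2 (hSparts a haS)
      · rw [Multiset.count_eq_zero_of_notMem haS]
        exact Nat.zero_le _
    set μ := p.parts - S.val with hμdef
    have hμodd : ∀ x ∈ μ, Odd x := fun x hx =>
      hpodd x (Multiset.mem_of_le (tsub_le_self) hx)
    have hadd : S.val + μ = p.parts := add_tsub_cancel_of_le hSle
    have hsums : S.val.sum + μ.sum = n := by
      rw [← Multiset.sum_add, hadd, p.parts_sum]
    have hparts_bound : ∀ x ∈ p.parts, 0 < x ∧ x ≤ n := by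
      intro x hx
      refine ⟨p.parts_pos hx, ?_⟩
      have := Multiset.single_le_sum (fun y _ => Nat.zero_le y) x hx
      rwa [p.parts_sum] at this
    have hG_bound : ∀ b ∈ G μ, 0 < b ∧ b ≤ n := by
      intro b hb
      constructor
      · obtain ⟨a, i, ha, rfl⟩ := exists_of_mem_G hb
        have ha' : 0 < a := (hparts_bound a (Multiset.mem_of_le (tsub_le_self) ha)).1
        positivity
      · have h1 : b ≤ ∑ x ∈ G μ, x := Finset.single_le_sum (fun y _ => Nat.zero_le y) hb
        rw [sum_G hμodd] at h1
        omega
    set f : Fin n → Bool × Bool :=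
      fun j => (decide (((j : ℕ) + 1) ∈ S), decide (((j : ℕ) + 1) ∈ G μ)) with hfdef
    have hs1 : s₁ n f = S := by
      ext m
      rw [mem_s₁]
      constructor
      · rintro ⟨j, hj, rfl⟩
        simpa [hfdef] using hj
      · intro hm
        have hb := hparts_bound m (hSparts m hm)
        refine ⟨⟨m - 1, by omega⟩, ?_, by simp; omega⟩
        simp only [hfdef, decide_eq_true_eq]
        have : (m - 1) + 1 = m := by omega
        simpa [this] using hm
    have hs2 : s₂ n f = G μ := by
      ext m
      rw [mem_s₂]
      constructor
      · rintro ⟨j, hj, rfl⟩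
        simpa [hfdef] using hj
      · intro hm
        have hb := hG_bound m hm
        refine ⟨⟨m - 1, by omega⟩, ?_, by simp; omega⟩
        simp only [hfdef, decide_eq_true_eq]
        have : (m - 1) + 1 = m := by omega
        simpa [this] using hm
    have hfP : f ∈ Pset n := by
      rw [Pset, Finset.mem_filter]
      refine ⟨mem_univ _, ?_, ?_⟩
      · intro j hev
        simp only [hfdef, decide_eq_false_iff_not]
        intro hmem
        exact (hpodds.2 _ (hSparts _ hmem)) hev
      · rw [← sum_s n f, hs1, hs2, sum_G hμodd]
        have hSsum : (∑ b ∈ S, b) = S.val.sum := by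
          rw [Finset.sum_eq_multiset_sum, Multiset.map_id']
        rw [hSsum]
        exact hsums
    refine ⟨f, hfP, ?_⟩
    have hpart : part n f hfP = p := by
      apply Nat.Partition.ext
      have hr : (part n f hfP).parts = (s₁ n f).val + gl (s₂ n f) := rfl
      rw [hr, hs1, hs2, gl_G hμodd]
      exact hadd
    rw [Sigma.mk.inj_iff]
    exact ⟨hpart, heq_of_eq hs1⟩


lemma lhs_eq_card (n : ℕ) :
    overPartitionsOdd n
      = ((Nat.Partition.odds n).sigma fun p => p.parts.toFinset.powerset).card := by
  rw [Finset.card_sigma, overPartitionsOdd]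
  exact Finset.sum_congr rfl fun p _ => (Finset.card_powerset _).symm

end OverPf

/-- The number of overpartitions of `n` into odd parts equals the sum, over all
nonnegative integer solutions of `t₁ + 2t₂ + ⋯ + n·tₙ = n`, of
`∏_{j=1}^n C(v(j), t_j)`.  (Any solution satisfies `t_j ≤ n`, so the tuples are
encoded with entries in `Fin (n+1)`.) -/
theorem overPartitionsOdd_eq_sum (n : ℕ) (hn : 0 < n) :
    overPartitionsOdd n =
      ∑ t ∈ (univ : Finset (Fin n → Fin (n + 1))).filter
          (fun t => ∑ i : Fin n, ((i : ℕ) + 1) * (t i : ℕ) = n),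
        ∏ i : Fin n, Nat.choose (vOver ((i : ℕ) + 1)) (t i : ℕ) := by
  rw [OverPf.lhs_eq_card, ← OverPf.card_eq]
  exact (OverPf.rhs_eq_card n).symm
end

section
/- The number ped(n) of partitions of n in which even parts are distinct (and odd parts may repeat) equals the sum over all nonnegative integer solutions of t₁ + 2t₂ + ... + n·tₙ = n of ∏_{j=1}^n C(v(j), t_j), where v(j) = 1 + v₂(4j-2) if j is even and v(j) = v₂(4j-2) if j is odd. -/
open Finset

/-- `ped n`: the number of partitions of `n` in which every even part occurs at
most once (odd parts may repeat). -/
def ped (n : ℕ) : ℕ :=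
  ((univ : Finset (Nat.Partition n)).filter
    (fun p => ∀ k ∈ p.parts, Even k → p.parts.count k ≤ 1)).card

/-- The exponent `v(j)`: `1 + v₂(4j-2)` if `j` is even, `v₂(4j-2)` if `j` is odd. -/
def vPed (j : ℕ) : ℕ :=
  if Even j then padicValNat 2 (4 * j - 2) + 1 else padicValNat 2 (4 * j - 2)

/- ### Machinery copied from Archive/Wiedijk100Theorems/Partition.lean
(Bhavik Mehta, Aaron Anderson; Apache 2.0) -/


open PowerSeries

namespace Theorems100

noncomputable section

variable {α : Type*}

open Finset

open scoped Classical

/-- The partial product for the generating function for odd partitions.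
TODO: As `m` tends to infinity, this converges (in the `X`-adic topology).

If `m` is sufficiently large, the `i`th coefficient gives the number of odd partitions of the
natural number `i`: proved in `oddGF_prop`.
It is stated for an arbitrary field `α`, though it usually suffices to use `ℚ` or `ℝ`.
-/
def partialOddGF (m : ℕ) [Field α] :=
  ∏ i ∈ range m, (1 - (X : PowerSeries α) ^ (2 * i + 1))⁻¹

/-- The partial product for the generating function for distinct partitions.
TODO: As `m` tends to infinity, this converges (in the `X`-adic topology).

If `m` is sufficiently large, the `i`th coefficient gives the number of distinct partitions of the
natural number `i`: proved in `distinctGF_prop`.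
It is stated for an arbitrary commutative semiring `α`, though it usually suffices to use `ℕ`, `ℚ`
or `ℝ`.
-/
def partialDistinctGF (m : ℕ) [CommSemiring α] :=
  ∏ i ∈ range m, (1 + (X : PowerSeries α) ^ (i + 1))

open Finset.HasAntidiagonal

universe u
variable {ι : Type u}

/-- A convenience constructor for the power series whose coefficients indicate a subset. -/
def indicatorSeries (α : Type*) [Semiring α] (s : Set ℕ) : PowerSeries α :=
  PowerSeries.mk fun n => if n ∈ s then 1 else 0

theorem coeff_indicator (s : Set ℕ) [Semiring α] (n : ℕ) :
    coeff (R := α) n (indicatorSeries _ s) = if n ∈ s then 1 else 0 :=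
  coeff_mk _ _

theorem coeff_indicator_pos (s : Set ℕ) [Semiring α] (n : ℕ) (h : n ∈ s) :
    coeff (R := α) n (indicatorSeries _ s) = 1 := by rw [coeff_indicator, if_pos h]

theorem coeff_indicator_neg (s : Set ℕ) [Semiring α] (n : ℕ) (h : n ∉ s) :
    coeff (R := α) n (indicatorSeries _ s) = 0 := by rw [coeff_indicator, if_neg h]

theorem constantCoeff_indicator (s : Set ℕ) [Semiring α] :
    constantCoeff (R := α) (indicatorSeries _ s) = if 0 ∈ s then 1 else 0 :=
  rfl

theorem two_series (i : ℕ) [Semiring α] :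
    1 + (X : PowerSeries α) ^ i.succ = indicatorSeries α {0, i.succ} := by
  ext n
  simp only [coeff_indicator, coeff_one, coeff_X_pow, Set.mem_insert_iff, Set.mem_singleton_iff,
    map_add]
  cases' n with d
  · simp [(Nat.succ_ne_zero i).symm]
  · simp [Nat.succ_ne_zero d]

theorem num_series' [Field α] (i : ℕ) :
    (1 - (X : PowerSeries α) ^ (i + 1))⁻¹ = indicatorSeries α {k | i + 1 ∣ k} := by
  rw [PowerSeries.inv_eq_iff_mul_eq_one]
  · ext n
    cases n with
    | zero => simp [mul_sub, zero_pow, constantCoeff_indicator]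
    | succ n =>
      simp only [coeff_one, if_false, mul_sub, mul_one, coeff_indicator,
        LinearMap.map_sub, reduceCtorEq]
      simp_rw [coeff_mul, coeff_X_pow, coeff_indicator, @boole_mul _ _ _ _]
      erw [@sum_ite _ _ _ _ _ (fun _ => Classical.propDecidable _), sum_ite]
      simp_rw [@filter_filter _ _ _ _ _, sum_const_zero, add_zero, sum_const, nsmul_eq_mul, mul_one,
        sub_eq_iff_eq_add, zero_add]
      symm
      split_ifs with h
      · suffices #{a ∈ antidiagonal (n + 1) | i + 1 ∣ a.fst ∧ a.snd = i + 1} = 1 by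
          simp only [Set.mem_setOf_eq]; convert congr_arg ((↑) : ℕ → α) this; norm_cast
        rw [card_eq_one]
        cases' h with p hp
        refine ⟨((i + 1) * (p - 1), i + 1), ?_⟩
        ext ⟨a₁, a₂⟩
        simp only [mem_filter, Prod.mk.injEq, Finset.HasAntidiagonal.mem_antidiagonal, mem_singleton]
        constructor
        · rintro ⟨a_left, ⟨a, rfl⟩, rfl⟩
          refine ⟨?_, rfl⟩
          rw [Nat.mul_sub_left_distrib, ← hp, ← a_left, mul_one, Nat.add_sub_cancel]
        · rintro ⟨rfl, rfl⟩
          match p with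
          | 0 => rw [mul_zero] at hp; cases hp
          | p + 1 => rw [hp]; simp [mul_add]
      · suffices #{a ∈ antidiagonal (n + 1) | i + 1 ∣ a.fst ∧ a.snd = i + 1} = 0 by
          simp only [Set.mem_setOf_eq]; convert congr_arg ((↑) : ℕ → α) this; norm_cast
        rw [card_eq_zero]
        apply eq_empty_of_forall_notMem
        simp only [Prod.forall, mem_filter, not_and, Finset.HasAntidiagonal.mem_antidiagonal]
        rintro _ h₁ h₂ ⟨a, rfl⟩ rfl
        apply h
        simp [← h₂]
  · simp [zero_pow]

theorem mkOdd_inj : Function.Injective (fun i : ℕ => 2 * i + 1) := fun x y h => by linarith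

def mkOdd : ℕ ↪ ℕ :=
  ⟨fun i => 2 * i + 1, mkOdd_inj⟩

-- The main workhorse of the partition theorem proof.
theorem partialGF_prop (α : Type*) [CommSemiring α] (n : ℕ) (s : Finset ℕ) (hs : ∀ i ∈ s, 0 < i)
    (c : ℕ → Set ℕ) (hc : ∀ i, i ∉ s → 0 ∈ c i) :
    #{p : n.Partition | (∀ j, p.parts.count j ∈ c j) ∧ ∀ j ∈ p.parts, j ∈ s} =
      coeff (R := α) n (∏ i ∈ s, indicatorSeries α ((· * i) '' c i)) := by
  simp_rw [coeff_prod, coeff_indicator, prod_boole, sum_boole]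
  apply congr_arg
  simp only [mem_univ, forall_true_left, not_and, not_forall, exists_prop,
    Set.mem_image, not_exists]
  set φ : (a : Nat.Partition n) →
    a ∈ filter (fun p ↦ (∀ (j : ℕ), Multiset.count j p.parts ∈ c j) ∧ ∀ j ∈ p.parts, j ∈ s) univ →
    ℕ →₀ ℕ := fun p _ => {
      toFun := fun i => Multiset.count i p.parts • i
      support := Finset.filter (fun i => i ≠ 0) p.parts.toFinset
      mem_support_toFun := fun a => by
        simp only [smul_eq_mul, ne_eq, mul_eq_zero, Multiset.count_eq_zero]
        rw [not_or, not_not]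
        simp only [Multiset.mem_toFinset, not_not, mem_filter] }
  refine Finset.card_bij φ ?_ ?_ ?_
  · intro a ha
    simp only [φ, not_forall, not_exists, not_and, exists_prop, mem_filter]
    rw [mem_finsuppAntidiag]
    dsimp only [ne_eq, smul_eq_mul, id_eq, eq_mpr_eq_cast, le_eq_subset, Finsupp.coe_mk]
    simp only [mem_univ, forall_true_left, not_and, not_forall, exists_prop,
      mem_filter, true_and] at ha
    refine ⟨⟨?_, fun i ↦ ?_⟩, fun i _ ↦ ⟨a.parts.count i, ha.1 i, rfl⟩⟩
    · conv_rhs => simp [← a.parts_sum]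
      rw [sum_multiset_count_of_subset _ s]
      · simp only [smul_eq_mul]
      · intro i
        simp only [Multiset.mem_toFinset, not_not, mem_filter]
        apply ha.2
    · simp only [ne_eq, Multiset.mem_toFinset, not_not, mem_filter, and_imp]
      exact fun hi _ ↦ ha.2 i hi
  · intro p₁ hp₁ p₂ hp₂ h
    apply Nat.Partition.ext
    simp only [true_and, mem_univ, mem_filter] at hp₁ hp₂
    ext i
    simp only [φ, ne_eq, Multiset.mem_toFinset, not_not, smul_eq_mul, Finsupp.mk.injEq] at h
    by_cases hi : i = 0
    · rw [hi]
      rw [Multiset.count_eq_zero_of_notMem]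
      · rw [Multiset.count_eq_zero_of_notMem]
        intro a; exact Nat.lt_irrefl 0 (hs 0 (hp₂.2 0 a))
      intro a; exact Nat.lt_irrefl 0 (hs 0 (hp₁.2 0 a))
    · rw [← mul_left_inj' hi]
      rw [funext_iff] at h
      exact h.2 i
  · simp only [φ, mem_filter, mem_finsuppAntidiag, mem_univ, exists_prop, true_and, and_assoc]
    rintro f ⟨hf, hf₃, hf₄⟩
    have hf' : f ∈ finsuppAntidiag s n := mem_finsuppAntidiag.mpr ⟨hf, hf₃⟩
    simp only [mem_finsuppAntidiag] at hf'
    refine ⟨⟨∑ i ∈ s, Multiset.replicate (f i / i) i, ?_, ?_⟩, ?_, ?_, ?_⟩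
    · intro i hi
      simp only [exists_prop, Multiset.mem_sum, mem_map, Function.Embedding.coeFn_mk] at hi
      rcases hi with ⟨t, ht, z⟩
      apply hs
      rwa [Multiset.eq_of_mem_replicate z]
    · simp_rw [Multiset.sum_sum, Multiset.sum_replicate, Nat.nsmul_eq_mul]
      rw [← hf'.1]
      refine sum_congr rfl fun i hi => Nat.div_mul_cancel ?_
      rcases hf₄ i hi with ⟨w, _, hw₂⟩
      rw [← hw₂]
      exact dvd_mul_left _ _
    · intro i
      simp_rw [Multiset.count_sum', Multiset.count_replicate, sum_ite_eq']
      split_ifs with h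
      · rcases hf₄ i h with ⟨w, hw₁, hw₂⟩
        rwa [← hw₂, Nat.mul_div_cancel _ (hs i h)]
      · exact hc _ h
    · intro i hi
      rw [Multiset.mem_sum] at hi
      rcases hi with ⟨j, hj₁, hj₂⟩
      rwa [Multiset.eq_of_mem_replicate hj₂]
    · ext i
      simp_rw [Multiset.count_sum', Multiset.count_replicate, sum_ite_eq']
      simp only [ne_eq, Multiset.mem_toFinset, not_not, smul_eq_mul, ite_mul,
        zero_mul, Finsupp.coe_mk]
      split_ifs with h
      · apply Nat.div_mul_cancel
        rcases hf₄ i h with ⟨w, _, hw₂⟩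
        apply Dvd.intro_left _ hw₂
      · apply symm
        rw [← Finsupp.notMem_support_iff]
        exact notMem_mono hf'.2 h

theorem partialOddGF_prop [Field α] (n m : ℕ) :
    #{p : n.Partition | ∀ j ∈ p.parts, j ∈ (range m).map mkOdd} = coeff (R := α) n (partialOddGF m) := by
  rw [partialOddGF]
  convert partialGF_prop α n
    ((range m).map mkOdd) _ (fun _ => Set.univ) (fun _ _ => trivial) using 2
  · congr
    simp only [true_and, forall_const, Set.mem_univ]
  · rw [Finset.prod_map]
    simp_rw [num_series']
    congr! 2 with x
    ext k
    constructor
    · rintro ⟨p, rfl⟩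
      refine ⟨p, ⟨⟩, ?_⟩
      apply mul_comm
    rintro ⟨a_w, -, rfl⟩
    apply Dvd.intro_left a_w rfl
  · intro i
    rw [mem_map]
    rintro ⟨a, -, rfl⟩
    exact Nat.succ_pos _

/-- If m is big enough, the partial product's coefficient counts the number of odd partitions -/
theorem oddGF_prop [Field α] (n m : ℕ) (h : n < m * 2) :
    #(Nat.Partition.odds n) = coeff (R := α) n (partialOddGF m) := by
  rw [← partialOddGF_prop, Nat.Partition.odds]
  congr 1; rw [Nat.Partition.restricted]; congr 1; ext p; simp only [mem_filter, mem_univ, true_and]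
  apply forall₂_congr
  intro i hi
  have hin : i ≤ n := by
    simpa [p.parts_sum] using Multiset.single_le_sum (fun _ _ => Nat.zero_le _) _ hi
  simp only [mkOdd, exists_prop, mem_range, Function.Embedding.coeFn_mk, mem_map]
  constructor
  · intro hi₂
    have := Nat.mod_add_div i 2
    rw [Nat.not_even_iff] at hi₂
    rw [hi₂, add_comm] at this
    refine ⟨i / 2, ?_, this⟩
    rw [Nat.div_lt_iff_lt_mul zero_lt_two]
    exact lt_of_le_of_lt hin h
  · rintro ⟨a, -, rfl⟩
    rw [even_iff_two_dvd]
    apply Nat.two_not_dvd_two_mul_add_one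

theorem partialDistinctGF_prop [CommSemiring α] (n m : ℕ) :
    #{p : n.Partition |
        p.parts.Nodup ∧ ∀ j ∈ p.parts, j ∈ (range m).map ⟨Nat.succ, Nat.succ_injective⟩} =
      coeff (R := α) n (partialDistinctGF m) := by
  rw [partialDistinctGF]
  convert partialGF_prop α n
    ((range m).map ⟨Nat.succ, Nat.succ_injective⟩) _ (fun _ => {0, 1}) (fun _ _ => Or.inl rfl)
    using 2
  · congr! with p
    rw [Multiset.nodup_iff_count_le_one]
    congr! 1 with i
    rcases Multiset.count i p.parts with (_ | _ | ms) <;> simp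
  · simp_rw [Finset.prod_map, two_series]
    congr with i
    simp [Set.image_pair]
  · simp only [mem_map, Function.Embedding.coeFn_mk]
    rintro i ⟨_, _, rfl⟩
    apply Nat.succ_pos

/-- If m is big enough, the partial product's coefficient counts the number of distinct partitions
-/
theorem distinctGF_prop [CommSemiring α] (n m : ℕ) (h : n < m + 1) :
    #(Nat.Partition.distincts n) = coeff (R := α) n (partialDistinctGF m) := by
  rw [← partialDistinctGF_prop, Nat.Partition.distincts]
  congr with p
  apply (and_iff_left _).symm
  intro i hi
  have : i ≤ n := by
    simpa [p.parts_sum] using Multiset.single_le_sum (fun _ _ => Nat.zero_le _) _ hi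
  simp only [mkOdd, exists_prop, mem_range, Function.Embedding.coeFn_mk, mem_map]
  refine ⟨i - 1, ?_, Nat.succ_pred_eq_of_pos (p.parts_pos hi)⟩
  rw [tsub_lt_iff_right (Nat.one_le_iff_ne_zero.mpr (p.parts_pos hi).ne')]
  exact lt_of_le_of_lt this h

/-- The key proof idea for the partition theorem, showing that the generating functions for both
sequences are ultimately the same (since the factor converges to 0 as m tends to infinity).
It's enough to not take the limit though, and just consider large enough `m`.
-/
theorem same_gf [Field α] (m : ℕ) :
    (partialOddGF m * (range m).prod fun i => 1 - (X : PowerSeries α) ^ (m + i + 1)) =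
      partialDistinctGF m := by
  rw [partialOddGF, partialDistinctGF]
  induction' m with m ih
  · simp
  set! π₀ : PowerSeries α := ∏ i ∈ range m, (1 - X ^ (m + 1 + i + 1)) with hπ₀
  set! π₁ : PowerSeries α := ∏ i ∈ range m, (1 - X ^ (2 * i + 1))⁻¹ with hπ₁
  set! π₂ : PowerSeries α := ∏ i ∈ range m, (1 - X ^ (m + i + 1)) with hπ₂
  set! π₃ : PowerSeries α := ∏ i ∈ range m, (1 + X ^ (i + 1)) with hπ₃
  rw [← hπ₃] at ih
  have h : constantCoeff (R := α) (1 - X ^ (2 * m + 1)) ≠ 0 := by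
    rw [RingHom.map_sub, RingHom.map_pow, constantCoeff_one, constantCoeff_X,
      zero_pow (2 * m).succ_ne_zero, sub_zero]
    exact one_ne_zero
  calc
    (∏ i ∈ range (m + 1), (1 - X ^ (2 * i + 1))⁻¹) *
          ∏ i ∈ range (m + 1), (1 - X ^ (m + 1 + i + 1)) =
        π₁ * (1 - X ^ (2 * m + 1))⁻¹ * (π₀ * (1 - X ^ (m + 1 + m + 1))) := by
      rw [prod_range_succ _ m, ← hπ₁, prod_range_succ _ m, ← hπ₀]
    _ = π₁ * (1 - X ^ (2 * m + 1))⁻¹ * (π₀ * ((1 + X ^ (m + 1)) * (1 - X ^ (m + 1)))) := by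
      rw [← sq_sub_sq, one_pow, add_assoc _ m 1, ← two_mul (m + 1), pow_mul']
    _ = π₀ * (1 - X ^ (m + 1)) * (1 - X ^ (2 * m + 1))⁻¹ * (π₁ * (1 + X ^ (m + 1))) := by ring
    _ =
        (∏ i ∈ range (m + 1), (1 - X ^ (m + 1 + i))) * (1 - X ^ (2 * m + 1))⁻¹ *
          (π₁ * (1 + X ^ (m + 1))) := by
      rw [prod_range_succ', add_zero, hπ₀]; simp_rw [← add_assoc]
    _ = π₂ * (1 - X ^ (m + 1 + m)) * (1 - X ^ (2 * m + 1))⁻¹ * (π₁ * (1 + X ^ (m + 1))) := by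
      rw [add_right_comm, hπ₂, ← prod_range_succ]; simp_rw [add_right_comm]
    _ = π₂ * (1 - X ^ (2 * m + 1)) * (1 - X ^ (2 * m + 1))⁻¹ * (π₁ * (1 + X ^ (m + 1))) := by
      rw [two_mul, add_right_comm _ m 1]
    _ = (1 - X ^ (2 * m + 1)) * (1 - X ^ (2 * m + 1))⁻¹ * π₂ * (π₁ * (1 + X ^ (m + 1))) := by ring
    _ = π₂ * (π₁ * (1 + X ^ (m + 1))) := by rw [PowerSeries.mul_inv_cancel _ h, one_mul]
    _ = π₁ * π₂ * (1 + X ^ (m + 1)) := by ring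
    _ = π₃ * (1 + X ^ (m + 1)) := by rw [ih]
    _ = _ := by rw [prod_range_succ]

theorem same_coeffs [Field α] (m n : ℕ) (h : n ≤ m) :
    coeff (R := α) n (partialOddGF m) = coeff (R := α) n (partialDistinctGF m) := by
  rw [← same_gf, coeff_mul_prod_one_sub_of_lt_order]
  rintro i -
  rw [order_X_pow]
  exact mod_cast Nat.lt_succ_of_le (le_add_right h)

theorem partition_theorem (n : ℕ) : #(Nat.Partition.odds n) = #(Nat.Partition.distincts n) := by
  suffices (#(Nat.Partition.odds n) : ℚ) = #(Nat.Partition.distincts n) from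
    mod_cast this
  rw [distinctGF_prop n (n + 1) (by linarith)]
  rw [oddGF_prop n (n + 1) (by linarith)]
  apply same_coeffs (n + 1) n n.le_succ

end

end Theorems100

/- ### Auxiliary lemmas -/

namespace PedAux
open Theorems100 PowerSeries
noncomputable section
open scoped Classical

lemma vPed_eq {j : ℕ} (hj : j ≠ 0) : vPed j = if Even j then 2 else 1 := by
  have h2 : 4 * j - 2 = 2 * (2 * j - 1) := by omega
  have hodd : ¬ (2 ∣ (2 * j - 1)) := by omega
  have : padicValNat 2 (4 * j - 2) = 1 := by
    rw [h2, padicValNat.mul (by norm_num) (by omega), padicValNat.self (by norm_num),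
      padicValNat.eq_zero_of_not_dvd hodd]
  rw [vPed, this]

/-- the product of `(1+X^j)` over even `0 < j ≤ n`. -/
def epartGF (n : ℕ) : PowerSeries ℚ :=
  ∏ j ∈ (range (n + 1)).filter (fun j => Even j ∧ j ≠ 0), (1 + X ^ j)

lemma finsum_eq {M : Type*} [AddCommMonoid M] {n : ℕ} {g : Fin n → M} {f : ℕ → M}
    (h : ∀ i : Fin n, g i = f i) : ∑ i : Fin n, g i = ∑ i ∈ range n, f i := by
  rw [← Fin.sum_univ_eq_sum_range]
  exact Finset.sum_congr rfl (fun i _ => h i)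

lemma finprod_eq {M : Type*} [CommMonoid M] {n : ℕ} {g : Fin n → M} {f : ℕ → M}
    (h : ∀ i : Fin n, g i = f i) : ∏ i : Fin n, g i = ∏ i ∈ range n, f i := by
  rw [← Fin.prod_univ_eq_prod_range]
  exact Finset.prod_congr rfl (fun i _ => h i)

lemma coeff_one_add_X_pow_pow (j v k : ℕ) (hj : j ≠ 0) :
    coeff (R := ℚ) k ((1 + X ^ j) ^ v) = if j ∣ k then (Nat.choose v (k / j) : ℚ) else 0 := by
  rw [add_comm, add_pow]
  simp only [one_pow, mul_one, ← pow_mul, map_sum]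
  have hterm : ∀ t, coeff (R := ℚ) k ((X : PowerSeries ℚ) ^ (j * t) * (v.choose t : PowerSeries ℚ))
      = if k = j * t then (v.choose t : ℚ) else 0 := by
    intro t
    rw [show ((v.choose t : PowerSeries ℚ)) = C ((v.choose t : ℚ)) from
        (map_natCast (C (R := ℚ)) _).symm, coeff_mul_C, coeff_X_pow]
    split_ifs <;> simp
  simp_rw [hterm]
  by_cases hdvd : j ∣ k
  · obtain ⟨q, rfl⟩ := hdvd
    rw [if_pos ⟨q, rfl⟩, Nat.mul_div_cancel_left _ (Nat.pos_of_ne_zero hj)]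
    have : ∀ t ∈ range (v + 1), (if j * q = j * t then (v.choose t : ℚ) else 0)
        = if t = q then (v.choose t : ℚ) else 0 := by
      intro t _
      congr 1
      simp only [eq_iff_iff]
      constructor
      · intro h; exact (Nat.eq_of_mul_eq_mul_left (Nat.pos_of_ne_zero hj) h.symm)
      · rintro rfl; rfl
    rw [Finset.sum_congr rfl this, Finset.sum_ite_eq' (range (v + 1))]
    split_ifs with h
    · rfl
    · rw [mem_range, not_lt] at h
      rw [Nat.choose_eq_zero_of_lt (by omega), Nat.cast_zero]
  · rw [if_neg hdvd]
    apply Finset.sum_eq_zero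
    intro t _
    rw [if_neg]
    rintro rfl
    exact hdvd ⟨t, rfl⟩

lemma rhs_eq_coeff (vf : ℕ → ℕ) (n : ℕ) :
    ((∑ t ∈ (univ : Finset (Fin n → Fin (n + 1))).filter
          (fun t => ∑ i : Fin n, ((i : ℕ) + 1) * (t i : ℕ) = n),
        ∏ i : Fin n, Nat.choose (vf ((i : ℕ) + 1)) (t i : ℕ) : ℕ) : ℚ)
      = coeff (R := ℚ) n (∏ i ∈ range n, (1 + X ^ (i + 1)) ^ (vf (i + 1))) := by
  rw [coeff_prod]
  push_cast
  refine Finset.sum_bij_ne_zero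
    (fun t _ _ => Finsupp.onFinset (range n)
      (fun i => if h : i < n then (i + 1) * ((t ⟨i, h⟩ : ℕ)) else 0)
      (fun a ha => by rw [mem_range]; by_contra h; exact ha (by simp [h])))
    ?_ ?_ ?_ ?_
  · intro t ht _
    rw [mem_finsuppAntidiag]
    rw [mem_filter] at ht
    constructor
    · rw [← finsum_eq (g := fun i : Fin n => ((i : ℕ) + 1) * (t i : ℕ))
        (fun i => by simp [Finsupp.onFinset_apply, dif_pos i.isLt]), ht.2]
    · intro a ha
      rw [Finsupp.mem_support_iff, Finsupp.onFinset_apply] at ha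
      rw [mem_range]
      by_contra h
      rw [dif_neg h] at ha
      exact ha rfl
  · intro t₁ h₁ h₁' t₂ h₂ h₂' heq
    funext i
    have := DFunLike.congr_fun heq (i : ℕ)
    simp only [Finsupp.onFinset_apply, dif_pos i.isLt, Fin.eta] at this
    ext
    exact Nat.eq_of_mul_eq_mul_left (Nat.succ_pos (i : ℕ)) this
  · intro l hl hg
    rw [mem_finsuppAntidiag] at hl
    have hdvd : ∀ i ∈ range n, (i + 1) ∣ l i := by
      intro i hi
      by_contra h
      apply hg
      apply Finset.prod_eq_zero hi
      rw [coeff_one_add_X_pow_pow _ _ _ (Nat.succ_ne_zero i), if_neg h]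
    have hle : ∀ i ∈ range n, l i ≤ n := by
      intro i hi
      rw [← hl.1]
      exact Finset.single_le_sum (fun _ _ => Nat.zero_le _) hi
    have hcoeff : ∀ i ∈ range n, coeff (R := ℚ) (l i) ((1 + X ^ (i + 1)) ^ (vf (i + 1)))
        = ((vf (i + 1)).choose (l i / (i + 1)) : ℚ) := by
      intro i hi
      rw [coeff_one_add_X_pow_pow _ _ _ (Nat.succ_ne_zero i), if_pos (hdvd i hi)]
    have hlt : ∀ i : Fin n, l (i : ℕ) / ((i : ℕ) + 1) < n + 1 := by
      intro i
      have h1 := hle i (mem_range.mpr i.isLt)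
      have h2 := Nat.div_le_self (l (i : ℕ)) ((i : ℕ) + 1)
      omega
    refine ⟨fun i => ⟨l i / ((i : ℕ) + 1), hlt i⟩, ?_, ?_, ?_⟩
    · rw [mem_filter]
      refine ⟨mem_univ _, ?_⟩
      rw [finsum_eq (f := fun i => l i) (fun i =>
        Nat.mul_div_cancel' (hdvd i (mem_range.mpr i.isLt)))]
      exact hl.1
    · rw [finprod_eq (f := fun i => coeff (R := ℚ) (l i) ((1 + X ^ (i + 1)) ^ (vf (i + 1))))
        (fun i => (hcoeff i (mem_range.mpr i.isLt)).symm)]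
      exact hg
    · ext a
      simp only [Finsupp.onFinset_apply]
      by_cases h : a < n
      · rw [dif_pos h]
        exact Nat.mul_div_cancel' (hdvd a (mem_range.mpr h))
      · rw [dif_neg h]
        by_contra hne
        have := hl.2 (Finsupp.mem_support_iff.mpr (fun hh => hne hh.symm))
        rw [mem_range] at this
        omega
  · intro t ht hne
    refine finprod_eq (fun i => ?_)
    simp only [Finsupp.onFinset_apply, dif_pos i.isLt]
    rw [coeff_one_add_X_pow_pow _ _ _ (Nat.succ_ne_zero _),
      if_pos (Dvd.intro _ rfl), Nat.mul_div_cancel_left _ (Nat.succ_pos _)]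

lemma prod_pow_vPed (n : ℕ) :
    (∏ i ∈ range n, ((1 : PowerSeries ℚ) + X ^ (i + 1)) ^ (vPed (i + 1)))
      = (∏ i ∈ range n, (1 + (X : PowerSeries ℚ) ^ (i + 1))) * epartGF n := by
  have step : ∀ i ∈ range n, ((1 : PowerSeries ℚ) + X ^ (i + 1)) ^ (vPed (i + 1))
      = (1 + X ^ (i + 1)) * (if Even (i + 1) then (1 + X ^ (i + 1)) else 1) := by
    intro i _
    rw [vPed_eq (Nat.succ_ne_zero i)]
    split_ifs <;> ring
  rw [Finset.prod_congr rfl step, Finset.prod_mul_distrib]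
  congr 1
  rw [← Finset.prod_filter, epartGF]
  refine Finset.prod_nbij' (fun i => i + 1) (fun j => j - 1) ?_ ?_ ?_ ?_ ?_
  · intro i hi
    simp only [mem_filter, mem_range] at hi ⊢
    exact ⟨by omega, hi.2, by omega⟩
  · intro j hj
    simp only [mem_filter, mem_range] at hj ⊢
    refine ⟨by omega, ?_⟩
    rw [show j - 1 + 1 = j by omega]
    exact hj.2.1
  · intro i _; rfl
  · intro j hj
    simp only [mem_filter, mem_range] at hj
    show j - 1 + 1 = j
    omega
  · intro i _; rfl

lemma coeff_mul_one_add_X_pow {n k : ℕ} (hk : n < k) (φ : PowerSeries ℚ) :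
    coeff (R := ℚ) n (φ * (1 + X ^ k)) = coeff (R := ℚ) n φ := by
  rw [mul_add, mul_one, map_add, coeff_mul_X_pow', if_neg (by omega), add_zero]

lemma ped_eq_coeff (n : ℕ) :
    (ped n : ℚ) = coeff (R := ℚ) n (partialOddGF (n + 1) * epartGF n) := by
  have hs : ∀ i ∈ ((range (n + 1)).map mkOdd) ∪
      ((range (n + 1)).filter (fun j => Even j ∧ j ≠ 0)), 0 < i := by
    intro i hi
    rw [mem_union] at hi
    rcases hi with hi | hi
    · obtain ⟨a, -, rfl⟩ := mem_map.mp hi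
      exact Nat.succ_pos _
    · have := (mem_filter.mp hi).2.2
      omega
  have hc : ∀ i, i ∉ ((range (n + 1)).map mkOdd) ∪
      ((range (n + 1)).filter (fun j => Even j ∧ j ≠ 0)) →
      0 ∈ (if Even i then ({0, 1} : Set ℕ) else Set.univ) := by
    intro i _
    split_ifs <;> simp
  have key := partialGF_prop ℚ n _ hs (fun j => if Even j then ({0, 1} : Set ℕ) else Set.univ) hc
  have hdisj : Disjoint ((range (n + 1)).map mkOdd)
      ((range (n + 1)).filter (fun j => Even j ∧ j ≠ 0)) := by
    rw [Finset.disjoint_left]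
    intro a ha ha'
    obtain ⟨i, -, rfl⟩ := mem_map.mp ha
    have : Even (mkOdd i) := (mem_filter.mp ha').2.1
    simp only [mkOdd, Function.Embedding.coeFn_mk, Nat.even_iff] at this
    omega
  have hprod : (∏ j ∈ ((range (n + 1)).map mkOdd) ∪
        ((range (n + 1)).filter (fun j => Even j ∧ j ≠ 0)),
        indicatorSeries ℚ ((· * j) '' (if Even j then ({0, 1} : Set ℕ) else Set.univ)))
      = partialOddGF (n + 1) * epartGF n := by
    rw [Finset.prod_union hdisj]
    congr 1
    · rw [Finset.prod_map, partialOddGF]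
      refine Finset.prod_congr rfl fun i _ => ?_
      have hodd : ¬ Even (mkOdd i) := by
        simp only [mkOdd, Function.Embedding.coeFn_mk, Nat.even_iff]
        omega
      have hset : ((· * (2 * i + 1)) '' Set.univ : Set ℕ) = {k | 2 * i + 1 ∣ k} := by
        ext k
        simp only [Set.mem_image, Set.mem_univ, true_and, Set.mem_setOf_eq]
        constructor
        · rintro ⟨a, rfl⟩; exact Dvd.intro_left a rfl
        · rintro ⟨a, rfl⟩; exact ⟨a, mul_comm _ _⟩
      simp only [mkOdd, Function.Embedding.coeFn_mk]
      show indicatorSeries ℚ ((· * (2 * i + 1)) '' (if Even (2 * i + 1) then ({0, 1} : Set ℕ) else Set.univ)) = _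
      rw [if_neg (show ¬ Even (2 * i + 1) from hodd), hset, num_series' (2 * i)]
    · rw [epartGF]
      refine Finset.prod_congr rfl fun j hj => ?_
      obtain ⟨-, hje, hj0⟩ : j ∈ range (n + 1) ∧ Even j ∧ j ≠ 0 := by
        simpa using hj
      rw [if_pos hje]
      have himg : ((· * j) '' {0, 1} : Set ℕ) = {0, j} := by
        rw [Set.image_pair]
        simp
      rw [himg]
      have h1 : ((j - 1) : ℕ).succ = j := by omega
      rw [← h1, ← two_series]
  rw [← hprod, ← key]
  norm_cast
  rw [ped]
  congr 1
  ext p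
  simp only [mem_filter, mem_univ, true_and, Set.mem_setOf_eq]
  constructor
  · intro h
    constructor
    · intro j
      split_ifs with hje
      · simp only [Set.mem_insert_iff, Set.mem_singleton_iff]
        by_cases hjp : j ∈ p.parts
        · have := h j hjp hje
          omega
        · left
          exact Multiset.count_eq_zero_of_notMem hjp
      · exact Set.mem_univ _
    · intro j hj
      have hjn : j ≤ n := by
        simpa [p.parts_sum] using Multiset.single_le_sum (fun _ _ => Nat.zero_le _) _ hj
      have hj0 : 0 < j := p.parts_pos hj
      rw [mem_union]
      by_cases hje : Even j
      · right
        rw [mem_filter, mem_range]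
        exact ⟨by omega, hje, by omega⟩
      · left
        rw [mem_map]
        rw [Nat.not_even_iff] at hje
        exact ⟨j / 2, mem_range.mpr (by omega), by
          simp only [mkOdd, Function.Embedding.coeFn_mk]; omega⟩
  · rintro ⟨h1, -⟩ k hk hke
    have := h1 k
    rw [if_pos hke] at this
    simp only [Set.mem_insert_iff, Set.mem_singleton_iff] at this
    omega

lemma coeff_swap (n : ℕ) :
    coeff (R := ℚ) n (partialOddGF (n + 1) * epartGF n)
      = coeff (R := ℚ) n (partialDistinctGF (n + 1) * epartGF n) := by
  rw [← same_gf (n + 1)]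
  rw [show partialOddGF (n + 1) *
        (∏ i ∈ range (n + 1), (1 - (X : PowerSeries ℚ) ^ (n + 1 + i + 1))) * epartGF n
      = partialOddGF (n + 1) * epartGF n *
        ∏ i ∈ range (n + 1), (1 - X ^ (n + 1 + i + 1)) by ring]
  rw [coeff_mul_prod_one_sub_of_lt_order]
  intro i _
  rw [order_X_pow]
  exact_mod_cast Nat.lt_succ_of_le (by omega)

lemma coeff_drop (n : ℕ) :
    coeff (R := ℚ) n (partialDistinctGF (n + 1) * epartGF n)
      = coeff (R := ℚ) n ((∏ i ∈ range n, (1 + (X : PowerSeries ℚ) ^ (i + 1))) * epartGF n) := by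
  rw [partialDistinctGF, prod_range_succ,
    show (∏ i ∈ range n, (1 + (X : PowerSeries ℚ) ^ (i + 1))) * (1 + X ^ (n + 1)) * epartGF n
      = (∏ i ∈ range n, (1 + (X : PowerSeries ℚ) ^ (i + 1))) * epartGF n * (1 + X ^ (n + 1))
      by ring,
    coeff_mul_one_add_X_pow (Nat.lt_succ_self n)]

end
end PedAux

/-- `ped n` equals the sum, over all nonnegative integer solutions of
`t₁ + 2t₂ + ⋯ + n·tₙ = n`, of `∏_{j=1}^n C(v(j), t_j)`. -/
theorem ped_eq_sum (n : ℕ) (hn : 0 < n) :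
    ped n =
      ∑ t ∈ (univ : Finset (Fin n → Fin (n + 1))).filter
          (fun t => ∑ i : Fin n, ((i : ℕ) + 1) * (t i : ℕ) = n),
        ∏ i : Fin n, Nat.choose (vPed ((i : ℕ) + 1)) (t i : ℕ) := by
  have h := PedAux.ped_eq_coeff n
  rw [PedAux.coeff_swap, PedAux.coeff_drop, ← PedAux.prod_pow_vPed,
    ← PedAux.rhs_eq_coeff vPed n] at h
  exact_mod_cast h
end
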